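/- arXiv:1906.01414 — 2 statements merged into one kernel-verified Lean document; each statement's English description precedes it below -/
import Mathlib

section
/- With the setup as above, for $a_1, a_2, a_3 \in \mathcal{O}_v$, the element $a_1 y + a_2 x + a_3 \in E = K(x)[y]/(dx^2 + ty^2 - 1)$ satisfies $\tilde{v}(a_1 y + a_2 x + a_3) = 0$ if and only if $\min\{v(a_1), v(a_2), v(a_3)\} = 0$. -/
/-- The minimal polynomial `y² - (1 - dx²)/t` of `y` over `K(x)`, whose adjunction gives the
function field `E = K(x)[y]/(dx² + ty² - 1)` of the conic `dx² + ty² = 1`. -/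
noncomputable def conicPoly (K : Type) [Field K] (d t : K) : Polynomial (RatFunc K) :=
  Polynomial.X ^ 2 - Polynomial.C ((1 - RatFunc.C d * RatFunc.X ^ 2) / RatFunc.C t)

/-!
Write `α = a₁y + a₂x + a₃` and `ᾱ = -a₁y + a₂x + a₃`. Since `y² = (1 - dx²)/t` has Gauss valuation
`1`, so does `y`, and the ultrametric inequality gives `ṽ(α), ṽ(ᾱ) ≤ max v(aᵢ)`; this settles one
direction. For the other, `t·αᾱ = t(a₂x + a₃)² - a₁²(1 - dx²)` is a quadratic polynomial in `x`
with integral coefficients, and its reduction modulo the maximal ideal vanishes only if all the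
`aᵢ` do (here `2, d, t` are units). So when some `aᵢ` is a unit, `ṽ(αᾱ) = 1`, which forces
`ṽ(α) = ṽ(ᾱ) = 1`.
-/

open Polynomial

section GaussValuation

variable {K : Type*} [Field K] {Γ₀ : Type*} [LinearOrderedCommGroupWithZero Γ₀]

def IsGaussValuation (v : Valuation K Γ₀) (v' : Valuation (RatFunc K) Γ₀) : Prop :=
  ∀ p : K[X], v' (algebraMap K[X] (RatFunc K) p) = p.support.sup fun l => v (p.coeff l)

variable {v : Valuation K Γ₀} {v' : Valuation (RatFunc K) Γ₀}

theorem IsGaussValuation.map_C (hv : IsGaussValuation v v') (a : K) : v' (RatFunc.C a) = v a := by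
  rcases eq_or_ne a 0 with rfl | ha
  · simp
  · rw [← RatFunc.algebraMap_C, hv, support_C ha, Finset.sup_singleton, coeff_C_zero]

theorem IsGaussValuation.map_X (hv : IsGaussValuation v v') : v' RatFunc.X = 1 := by
  rw [← RatFunc.algebraMap_X, hv, support_X, Finset.sup_singleton, coeff_X_one, map_one]

theorem IsGaussValuation.coeff_le (hv : IsGaussValuation v v') (p : K[X]) (n : ℕ) :
    v (p.coeff n) ≤ v' (algebraMap K[X] (RatFunc K) p) := by
  by_cases hn : n ∈ p.support
  · rw [hv]
    exact Finset.le_sup (f := fun l => v (p.coeff l)) hn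
  · rw [notMem_support_iff.1 hn, map_zero]
    exact zero_le

end GaussValuation

section ConicNorm

variable {R : Type*} [CommRing R]

/-- `t` times the norm of `a₁y + a₂x + a₃` from the function field of `dx² + ty² = 1` to `R(x)`. -/
noncomputable def conicNormPoly (d t a₁ a₂ a₃ : R) : R[X] :=
  C (t * a₂ ^ 2 + d * a₁ ^ 2) * X ^ 2 + C (2 * t * a₂ * a₃) * X + C (t * a₃ ^ 2 - a₁ ^ 2)

variable (d t a₁ a₂ a₃ : R)

theorem coeff_conicNormPoly_zero : (conicNormPoly d t a₁ a₂ a₃).coeff 0 = t * a₃ ^ 2 - a₁ ^ 2 := by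
  simp [conicNormPoly, coeff_C, -map_mul, -map_pow, -map_add, -map_sub]

theorem coeff_conicNormPoly_one : (conicNormPoly d t a₁ a₂ a₃).coeff 1 = 2 * t * a₂ * a₃ := by
  simp [conicNormPoly, coeff_C, -map_mul, -map_pow, -map_add, -map_sub]

theorem coeff_conicNormPoly_two :
    (conicNormPoly d t a₁ a₂ a₃).coeff 2 = t * a₂ ^ 2 + d * a₁ ^ 2 := by
  simp [conicNormPoly, -map_mul, -map_pow, -map_add, -map_sub]

theorem map_conicNormPoly {S : Type*} [CommRing S] (f : R →+* S) :
    (conicNormPoly d t a₁ a₂ a₃).map f = conicNormPoly (f d) (f t) (f a₁) (f a₂) (f a₃) := by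
  simp [conicNormPoly, map_ofNat]

theorem eq_zero_of_conicNormPoly_eq_zero {k : Type*} [Field k] (h2 : (2 : k) ≠ 0) {d t : k}
    (hd : d ≠ 0) (ht : t ≠ 0) {a₁ a₂ a₃ : k} (h : conicNormPoly d t a₁ a₂ a₃ = 0) :
    a₁ = 0 ∧ a₂ = 0 ∧ a₃ = 0 := by
  have h₀ := coeff_conicNormPoly_zero d t a₁ a₂ a₃
  have h₁ := coeff_conicNormPoly_one d t a₁ a₂ a₃
  have h₂ := coeff_conicNormPoly_two d t a₁ a₂ a₃
  rw [h, coeff_zero] at h₀ h₁ h₂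
  obtain ha₂ | ha₃ : a₂ = 0 ∨ a₃ = 0 := by simpa [h2, ht] using h₁.symm
  · subst ha₂
    have ha₁ : a₁ = 0 := by simpa [hd] using h₂
    subst ha₁
    simpa [ht] using h₀
  · subst ha₃
    have ha₁ : a₁ = 0 := by simpa using h₀
    subst ha₁
    simpa [ht] using h₂

end ConicNorm

theorem exists_valuation_coeff_conicNormPoly_eq_one {K : Type*} [Field K] {Γ₀ : Type*}
    [LinearOrderedCommGroupWithZero Γ₀] (v : Valuation K Γ₀)
    (h2 : (2 : IsLocalRing.ResidueField v.valuationSubring) ≠ 0) {d t : K} (hd : v d = 1)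
    (ht : v t = 1) {a₁ a₂ a₃ : K} (ha₁ : v a₁ ≤ 1) (ha₂ : v a₂ ≤ 1) (ha₃ : v a₃ ≤ 1)
    (hmax : max (v a₁) (max (v a₂) (v a₃)) = 1) :
    ∃ n, v ((conicNormPoly d t a₁ a₂ a₃).coeff n) = 1 := by
  set O := v.valuationSubring
  let P : O[X] := conicNormPoly ⟨d, hd.le⟩ ⟨t, ht.le⟩ ⟨a₁, ha₁⟩ ⟨a₂, ha₂⟩ ⟨a₃, ha₃⟩
  have hP : conicNormPoly d t a₁ a₂ a₃ = P.map (algebraMap O K) := by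
    rw [map_conicNormPoly]; rfl
  have hres (x : O) : IsLocalRing.residue O x = 0 ↔ v x < 1 :=
    (IsLocalRing.residue_eq_zero_iff x).trans (Valuation.mem_maximalIdeal_iff _ v)
  have hunit {x : K} (hx : v x = 1) : IsLocalRing.residue O ⟨x, hx.le⟩ ≠ 0 := by
    simp [hres, hx]
  have hPres : P.map (IsLocalRing.residue O) ≠ 0 := by
    rw [map_conicNormPoly]
    intro h
    obtain ⟨h₁, h₂, h₃⟩ := eq_zero_of_conicNormPoly_eq_zero h2 (hunit hd) (hunit ht) h
    rw [hres] at h₁ h₂ h₃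
    exact (max_lt h₁ (max_lt h₂ h₃)).ne hmax
  refine ⟨(P.map (IsLocalRing.residue O)).natDegree, ?_⟩
  have hn := leadingCoeff_ne_zero.2 hPres
  rw [leadingCoeff, coeff_map, Ne, hres, not_lt] at hn
  rw [hP, coeff_map]
  exact le_antisymm (P.coeff _).2 hn

section ConicFunctionField

variable {K : Type} [Field K] {d t : K}

theorem conicPoly_root_sq :
    AdjoinRoot.root (conicPoly K d t) ^ 2 = algebraMap (RatFunc K) (AdjoinRoot (conicPoly K d t))
      ((1 - RatFunc.C d * RatFunc.X ^ 2) / RatFunc.C t) := by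
  have h := AdjoinRoot.eval₂_root (conicPoly K d t)
  rwa [conicPoly, eval₂_sub, eval₂_X_pow, eval₂_C, sub_eq_zero, ← AdjoinRoot.algebraMap_eq] at h

theorem conicPoly_norm (f g : RatFunc K) :
    (algebraMap (RatFunc K) (AdjoinRoot (conicPoly K d t)) f * AdjoinRoot.root (conicPoly K d t) +
        algebraMap (RatFunc K) (AdjoinRoot (conicPoly K d t)) g) *
      (algebraMap (RatFunc K) (AdjoinRoot (conicPoly K d t)) (-f) *
          AdjoinRoot.root (conicPoly K d t) +
        algebraMap (RatFunc K) (AdjoinRoot (conicPoly K d t)) g) =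
    algebraMap (RatFunc K) (AdjoinRoot (conicPoly K d t))
      (g ^ 2 - f ^ 2 * ((1 - RatFunc.C d * RatFunc.X ^ 2) / RatFunc.C t)) := by
  rw [map_sub, map_mul, map_pow, map_pow, ← conicPoly_root_sq, map_neg]
  ring

theorem algebraMap_conicNormPoly_div (ht : t ≠ 0) (a₁ a₂ a₃ : K) :
    algebraMap K[X] (RatFunc K) (conicNormPoly d t a₁ a₂ a₃) / RatFunc.C t =
      (RatFunc.C a₂ * RatFunc.X + RatFunc.C a₃) ^ 2 -
        RatFunc.C a₁ ^ 2 * ((1 - RatFunc.C d * RatFunc.X ^ 2) / RatFunc.C t) := by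
  have hCt : (RatFunc.C t : RatFunc K) ≠ 0 := by simpa using ht
  field_simp
  simp only [conicNormPoly, map_add, map_sub, map_mul, map_pow, map_ofNat, RatFunc.algebraMap_C,
    RatFunc.algebraMap_X]
  ring

variable {Γ₀ : Type*} [LinearOrderedCommGroupWithZero Γ₀] {v : Valuation K Γ₀}
  {v' : Valuation (RatFunc K) Γ₀} {Γ : Type*} [LinearOrderedCommGroupWithZero Γ]
  {w : Valuation (AdjoinRoot (conicPoly K d t)) Γ} {e : Γ₀ →*₀ Γ}

theorem valuation_root_le_one (hv : IsGaussValuation v v') (hd : v d ≤ 1) (ht : v t = 1)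
    (he : Monotone e)
    (hcomp : ∀ g, w (algebraMap (RatFunc K) (AdjoinRoot (conicPoly K d t)) g) = e (v' g)) :
    w (AdjoinRoot.root (conicPoly K d t)) ≤ 1 := by
  rw [← pow_le_one_iff two_ne_zero, ← map_pow, conicPoly_root_sq, hcomp, ← map_one e]
  refine he ?_
  rw [map_div₀, hv.map_C, ht, div_one]
  refine (v'.map_sub _ _).trans (max_le (map_one v').le ?_)
  rw [map_mul, map_pow, hv.map_C, hv.map_X, one_pow, mul_one]
  exact hd

theorem valuation_linear_le (hv : IsGaussValuation v v') (hd : v d ≤ 1) (ht : v t = 1)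
    (he : Monotone e)
    (hcomp : ∀ g, w (algebraMap (RatFunc K) (AdjoinRoot (conicPoly K d t)) g) = e (v' g))
    (a₁ a₂ a₃ : K) :
    w (algebraMap (RatFunc K) (AdjoinRoot (conicPoly K d t)) (RatFunc.C a₁) *
          AdjoinRoot.root (conicPoly K d t) +
        algebraMap (RatFunc K) (AdjoinRoot (conicPoly K d t))
          (RatFunc.C a₂ * RatFunc.X + RatFunc.C a₃)) ≤
      e (max (v a₁) (max (v a₂) (v a₃))) := by
  have h₁ : w (algebraMap (RatFunc K) _ (RatFunc.C a₁) * AdjoinRoot.root (conicPoly K d t)) ≤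
      e (v a₁) := by
    rw [map_mul, hcomp, hv.map_C]
    exact mul_le_of_le_one_right' (valuation_root_le_one hv hd ht he hcomp)
  have h₂ : w (algebraMap (RatFunc K) (AdjoinRoot (conicPoly K d t))
      (RatFunc.C a₂ * RatFunc.X + RatFunc.C a₃)) ≤ e (max (v a₂) (v a₃)) := by
    rw [hcomp]
    refine he ((v'.map_add _ _).trans (max_le_max ?_ (hv.map_C a₃).le))
    rw [map_mul, hv.map_C, hv.map_X, mul_one]
  calc _ ≤ max _ _ := w.map_add _ _
    _ ≤ max (e (v a₁)) (e (max (v a₂) (v a₃))) := max_le_max h₁ h₂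
    _ = _ := (he.map_max).symm

end ConicFunctionField

theorem stmt9_general (K : Type) [Field K] [Valued K (WithZero (Multiplicative ℤ))]
    (hres : (2 : IsLocalRing.ResidueField
      ((Valued.v : Valuation K (WithZero (Multiplicative ℤ))).valuationSubring)) ≠ 0)
    (d t : K) (hd : Valued.v d = 1) (ht : Valued.v t = 1)
    (v' : Valuation (RatFunc K) (WithZero (Multiplicative ℤ)))
    (hv' : ∀ p : Polynomial K,
      v' (algebraMap (Polynomial K) (RatFunc K) p) = p.support.sup fun l => Valued.v (p.coeff l))
    (Γ : Type) [LinearOrderedCommGroupWithZero Γ]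
    (w : Valuation (AdjoinRoot (conicPoly K d t)) Γ)
    (e : (WithZero (Multiplicative ℤ)) →*₀ Γ) (he : StrictMono e)
    (hcomp : ∀ g : RatFunc K,
      w (algebraMap (RatFunc K) (AdjoinRoot (conicPoly K d t)) g) = e (v' g))
    (a₁ a₂ a₃ : K) (ha₁ : Valued.v a₁ ≤ 1) (ha₂ : Valued.v a₂ ≤ 1) (ha₃ : Valued.v a₃ ≤ 1) :
    w (algebraMap (RatFunc K) (AdjoinRoot (conicPoly K d t)) (RatFunc.C a₁) *
        AdjoinRoot.root (conicPoly K d t) +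
      algebraMap (RatFunc K) (AdjoinRoot (conicPoly K d t))
        (RatFunc.C a₂ * RatFunc.X + RatFunc.C a₃)) = 1 ↔
    max (Valued.v a₁) (max (Valued.v a₂) (Valued.v a₃)) = 1 := by
  have hv : IsGaussValuation Valued.v v' := hv'
  have hle := valuation_linear_le hv hd.le ht he.monotone hcomp
  have hmax_le : max (Valued.v a₁) (max (Valued.v a₂) (Valued.v a₃)) ≤ 1 :=
    max_le ha₁ (max_le ha₂ ha₃)
  constructor
  · intro h
    refine le_antisymm hmax_le (not_lt.1 fun hlt => ?_)
    exact ((hle a₁ a₂ a₃).trans_lt ((he hlt).trans_eq (map_one e))).ne h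
  · intro hmax
    have ht0 : t ≠ 0 := by rintro rfl; simp at ht
    obtain ⟨n, hn⟩ :=
      exists_valuation_coeff_conicNormPoly_eq_one Valued.v hres hd ht ha₁ ha₂ ha₃ hmax
    have hnorm := conicPoly_norm (d := d) (t := t) (RatFunc.C a₁)
      (RatFunc.C a₂ * RatFunc.X + RatFunc.C a₃)
    rw [← map_neg, ← algebraMap_conicNormPoly_div ht0] at hnorm
    have hwnorm := congrArg w hnorm
    rw [map_mul, hcomp, map_div₀, hv.map_C, ht, div_one] at hwnorm
    refine eq_one_of_one_le_mul_left ((hle a₁ a₂ a₃).trans_eq (by rw [hmax, map_one]))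
      ((hle (-a₁) a₂ a₃).trans_eq (by rw [Valuation.map_neg, hmax, map_one])) ?_
    rw [hwnorm, ← map_one e]
    exact he.monotone (hn ▸ hv.coeff_le _ n)

/-- With `K` complete discretely valued of residue characteristic `≠ 2`, `d,t`
units, residue conic nonsplit, and `ṽ` the extension to `E = K(x)[y]/(dx²+ty²-1)` of the Gauss
valuation `v'` on `K(x)`: for `a₁, a₂, a₃` in the valuation ring, `ṽ(a₁y + a₂x + a₃) = 0`
(multiplicatively `= 1`) iff `min{v(a₁), v(a₂), v(a₃)} = 0` (multiplicatively
`max{v(a₁),v(a₂),v(a₃)} = 1`). -/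
theorem stmt9 (K : Type) [Field K] [Valued K (WithZero (Multiplicative ℤ))] [CompleteSpace K]
    (hdisc : Function.Surjective (Valued.v : Valuation K (WithZero (Multiplicative ℤ))))
    (hres : (2 : IsLocalRing.ResidueField
      ((Valued.v : Valuation K (WithZero (Multiplicative ℤ))).valuationSubring)) ≠ 0)
    (d t : K) (hd : Valued.v d = 1) (ht : Valued.v t = 1)
    [hirr : Fact (Irreducible (conicPoly K d t))]
    (hirrres : Irreducible (conicPoly
      (IsLocalRing.ResidueField
        ((Valued.v : Valuation K (WithZero (Multiplicative ℤ))).valuationSubring))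
      (IsLocalRing.residue _ ⟨d, le_of_eq hd⟩) (IsLocalRing.residue _ ⟨t, le_of_eq ht⟩)))
    (v' : Valuation (RatFunc K) (WithZero (Multiplicative ℤ)))
    (hv' : ∀ p : Polynomial K,
      v' (algebraMap (Polynomial K) (RatFunc K) p) = p.support.sup fun l => Valued.v (p.coeff l))
    (Γ : Type) [LinearOrderedCommGroupWithZero Γ]
    (w : Valuation (AdjoinRoot (conicPoly K d t)) Γ)
    (e : (WithZero (Multiplicative ℤ)) →*₀ Γ) (he : StrictMono e)
    (hcomp : ∀ g : RatFunc K,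
      w (algebraMap (RatFunc K) (AdjoinRoot (conicPoly K d t)) g) = e (v' g))
    (a₁ a₂ a₃ : K) (ha₁ : Valued.v a₁ ≤ 1) (ha₂ : Valued.v a₂ ≤ 1) (ha₃ : Valued.v a₃ ≤ 1) :
    w (algebraMap (RatFunc K) (AdjoinRoot (conicPoly K d t)) (RatFunc.C a₁) *
        AdjoinRoot.root (conicPoly K d t) +
      algebraMap (RatFunc K) (AdjoinRoot (conicPoly K d t))
        (RatFunc.C a₂ * RatFunc.X + RatFunc.C a₃)) = 1 ↔
    max (Valued.v a₁) (max (Valued.v a₂) (Valued.v a₃)) = 1 :=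
  stmt9_general K hres d t hd ht v' hv' Γ w e he hcomp a₁ a₂ a₃ ha₁ ha₂ ha₃
end

section
/- Let $Q = (d,t)$ be a quaternion algebra over a field $K$ of characteristic $\neq 2$ with basis $1, i, j, ij$ where $i^2 = d$, $j^2 = t$, $ij = -ji$. Let $L$ be the fraction field of $K[x,y]/(dx^2+ty^2-1)$. Then the $K$-algebra map sending $i \mapsto \begin{pmatrix} dx & -y \\ -dty & -dx \end{pmatrix}$, $j \mapsto \begin{pmatrix} ty & x \\ dtx & -ty \end{pmatrix}$, $ij \mapsto \begin{pmatrix} 0 & 1 \\ -dt & 0 \end{pmatrix}$ extends to an isomorphism of $L$-algebras $Q \otimes_K L \cong M_2(L)$. -/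
open scoped Quaternion TensorProduct

/-! The point `(x, y)` of the conic `dx² + ty² = 1` gives matrices `I`, `J` over `L` with
`I² = d`, `J² = t`, `IJ = -JI`, hence a `K`-algebra map `ℍ[K,d,t] → M₂(L)` and, by base change,
an `L`-algebra map `L ⊗ ℍ[K,d,t] → M₂(L)`. Its image contains `xI + yJ = diag(1, -1)` and
`IJ = [[0, 1], [-dt, 0]]`, which generate `M₂(L)` once `2` and `dt` are invertible. A surjection
between free `L`-modules of rank four is bijective. -/

abbrev ConicRing (K : Type) [Field K] (d t : K) : Type :=
  MvPolynomial (Fin 2) K ⧸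
    Ideal.span {MvPolynomial.C d * MvPolynomial.X 0 ^ 2 +
      MvPolynomial.C t * MvPolynomial.X 1 ^ 2 - 1}

namespace Matrix

variable {α : Type*}

theorem of_fin_two_eq_iff {a b c d e f g h : α} :
    !![a, b; c, d] = !![e, f; g, h] ↔ a = e ∧ b = f ∧ c = g ∧ d = h := by
  simp [and_assoc]

theorem smul_fin_two {R : Type*} [SMul R α] (r : R) (a b c d : α) :
    r • !![a, b; c, d] = !![r • a, r • b; r • c, r • d] := by
  ext i j; fin_cases i <;> fin_cases j <;> rfl

theorem adjoin_fin_two_eq_top {R : Type*} [CommRing R] (h2 : IsUnit (2 : R)) {c : R}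
    (hc : IsUnit c) : Algebra.adjoin R {!![1, 0; 0, -1], !![0, 1; c, 0]} = ⊤ := by
  set S := Algebra.adjoin R {(!![1, 0; 0, -1] : Matrix (Fin 2) (Fin 2) R), !![0, 1; c, 0]}
  obtain ⟨u, hu⟩ := h2.exists_left_inv
  obtain ⟨v, hv⟩ := hc.exists_left_inv
  have hD : !![1, 0; 0, -1] ∈ S := Algebra.subset_adjoin (by simp)
  have hN : !![0, 1; c, 0] ∈ S := Algebra.subset_adjoin (by simp)
  have hDN : !![1, 0; 0, -1] * !![0, 1; c, 0] ∈ S := mul_mem hD hN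
  have h00 : single 0 0 1 ∈ S := by
    convert S.smul_mem (add_mem S.one_mem hD) u using 1
    rw [one_fin_two]; ext i j; fin_cases i <;> fin_cases j <;> simp [single]
    linear_combination -hu
  have h11 : single 1 1 1 ∈ S := by
    convert S.smul_mem (sub_mem S.one_mem hD) u using 1
    rw [one_fin_two]; ext i j; fin_cases i <;> fin_cases j <;> simp [single]
    linear_combination -hu
  have h01 : single 0 1 1 ∈ S := by
    convert S.smul_mem (add_mem hN hDN) u using 1
    rw [mul_fin_two]; ext i j; fin_cases i <;> fin_cases j <;> simp [single]
    linear_combination -hu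
  have h10 : single 1 0 1 ∈ S := by
    convert S.smul_mem (sub_mem hN hDN) (u * v) using 1
    rw [mul_fin_two]; ext i j; fin_cases i <;> fin_cases j <;> simp [single]
    linear_combination -(v * c) * hu - hv
  have hsingle : ∀ i j, single i j (1 : R) ∈ S := by
    intro i j; fin_cases i <;> fin_cases j <;> assumption
  refine eq_top_iff.2 fun M _ ↦ ?_
  rw [matrix_eq_sum_single M]
  refine sum_mem fun i _ ↦ sum_mem fun j _ ↦ ?_
  simpa [smul_single] using S.smul_mem (hsingle i j) (M i j)

end Matrix

namespace QuaternionAlgebra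

variable {K L : Type*} [CommRing K] [CommRing L] [Algebra K L] {d t : K} {x y : L}

def Basis.ofConicPoint (h : algebraMap K L d * x ^ 2 + algebraMap K L t * y ^ 2 = 1) :
    Basis (Matrix (Fin 2) (Fin 2) L) d 0 t where
  i := !![algebraMap K L d * x, -y; -(algebraMap K L (d * t)) * y, -(algebraMap K L d * x)]
  j := !![algebraMap K L t * y, x; algebraMap K L (d * t) * x, -(algebraMap K L t * y)]
  k := !![0, 1; -(algebraMap K L (d * t)), 0]
  i_mul_i := by
    rw [Matrix.one_fin_two, zero_smul, add_zero, Matrix.smul_fin_two, Matrix.mul_fin_two,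
      Matrix.of_fin_two_eq_iff]
    simp only [Algebra.smul_def, map_mul, mul_one, mul_zero]
    exact ⟨by linear_combination algebraMap K L d * h, by ring, by ring,
      by linear_combination algebraMap K L d * h⟩
  j_mul_j := by
    rw [Matrix.one_fin_two, Matrix.smul_fin_two, Matrix.mul_fin_two, Matrix.of_fin_two_eq_iff]
    simp only [Algebra.smul_def, map_mul, mul_one, mul_zero]
    exact ⟨by linear_combination algebraMap K L t * h, by ring, by ring,
      by linear_combination algebraMap K L t * h⟩
  i_mul_j := by
    rw [Matrix.mul_fin_two, Matrix.of_fin_two_eq_iff, map_mul]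
    exact ⟨by ring, by linear_combination h, by
      linear_combination -(algebraMap K L d * algebraMap K L t) * h, by ring⟩
  j_mul_i := by
    rw [zero_smul, zero_sub, Matrix.mul_fin_two, Matrix.neg_of]
    simp only [Matrix.neg_cons, Matrix.neg_empty, neg_zero, neg_neg, map_mul]
    rw [Matrix.of_fin_two_eq_iff]
    exact ⟨by ring, by linear_combination -h, by
      linear_combination algebraMap K L d * algebraMap K L t * h, by ring⟩

theorem Basis.ofConicPoint_smul_i_add_smul_j
    (h : algebraMap K L d * x ^ 2 + algebraMap K L t * y ^ 2 = 1) :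
    x • (Basis.ofConicPoint h).i + y • (Basis.ofConicPoint h).j = !![1, 0; 0, -1] := by
  simp only [Basis.ofConicPoint, Matrix.smul_fin_two, smul_eq_mul, Matrix.of_add_of,
    Matrix.cons_add_cons, Matrix.empty_add_empty]
  rw [Matrix.of_fin_two_eq_iff, map_mul]
  exact ⟨by linear_combination h, by ring, by ring, by linear_combination -h⟩

theorem bijective_liftEquiv_liftHom_ofConicPoint [Nontrivial L]
    (h : algebraMap K L d * x ^ 2 + algebraMap K L t * y ^ 2 = 1)
    (h2 : IsUnit (2 : L)) (hdt : IsUnit (algebraMap K L (d * t))) :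
    Function.Bijective
      (AlgHom.liftEquiv K L ℍ[K,d,t] _ (Basis.ofConicPoint h).liftHom) := by
  set B := Basis.ofConicPoint h
  set f := AlgHom.liftEquiv K L ℍ[K,d,t] _ B.liftHom
  have hmem : ∀ q, B.lift q ∈ f.range := fun q ↦ ⟨1 ⊗ₜ q, by simp [f]⟩
  have hi : B.i ∈ f.range := by simpa [Basis.lift] using hmem ⟨0, 1, 0, 0⟩
  have hj : B.j ∈ f.range := by simpa [Basis.lift] using hmem ⟨0, 0, 1, 0⟩
  have hk : B.k ∈ f.range := by simpa [Basis.lift] using hmem ⟨0, 0, 0, 1⟩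
  have hsurj : f.range = ⊤ := by
    refine eq_top_iff.2 (Matrix.adjoin_fin_two_eq_top h2 hdt.neg ▸ Algebra.adjoin_le ?_)
    rintro _ (rfl | rfl)
    · rw [← Basis.ofConicPoint_smul_i_add_smul_j h]
      exact add_mem (f.range.smul_mem hi x) (f.range.smul_mem hj y)
    · exact hk
  refine OrzechProperty.bijective_of_surjective_of_finrank_le f.toLinearMap
    ((AlgHom.range_eq_top f).1 hsurj) ?_
  have := (algebraMap K L).domain_nontrivial
  rw [Module.finrank_baseChange, QuaternionAlgebra.finrank_eq_four, Module.finrank_matrix]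
  simp

end QuaternionAlgebra

theorem ConicRing.algebraMap_conic_relation {K : Type} [Field K] {d t : K} (L : Type*)
    [CommRing L] [Algebra (ConicRing K d t) L] [Algebra K L]
    [IsScalarTower K (ConicRing K d t) L] :
    algebraMap K L d * algebraMap (ConicRing K d t) L (Ideal.Quotient.mk _ (MvPolynomial.X 0)) ^ 2 +
      algebraMap K L t * algebraMap (ConicRing K d t) L (Ideal.Quotient.mk _ (MvPolynomial.X 1)) ^ 2
      = 1 := by
  have h0 : (Ideal.Quotient.mk _ (MvPolynomial.C d * MvPolynomial.X 0 ^ 2 +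
      MvPolynomial.C t * MvPolynomial.X 1 ^ 2 - 1) : ConicRing K d t) = 0 :=
    Ideal.Quotient.eq_zero_iff_mem.2 (Ideal.subset_span rfl)
  have hC (c : K) : (Ideal.Quotient.mk _ (MvPolynomial.C c) : ConicRing K d t) =
      algebraMap K _ c :=
    Ideal.Quotient.mk_algebraMap K _ c
  rw [map_sub, map_one, sub_eq_zero, map_add, map_mul, map_mul, map_pow, map_pow, hC, hC] at h0
  simpa only [map_add, map_mul, map_pow, map_one, ← IsScalarTower.algebraMap_apply] using
    congrArg (algebraMap (ConicRing K d t) L) h0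

theorem stmt11_general (K : Type) [Field K] (h2 : (2 : K) ≠ 0) (d t : K) (hd : d ≠ 0) (ht : t ≠ 0)
    (L : Type) [Field L] [Algebra (ConicRing K d t) L]
    [Algebra K L]
    [IsScalarTower K (ConicRing K d t) L]
    (x y : L)
    (hx : x = algebraMap (ConicRing K d t) L
      (Ideal.Quotient.mk _ (MvPolynomial.X 0)))
    (hy : y = algebraMap (ConicRing K d t) L
      (Ideal.Quotient.mk _ (MvPolynomial.X 1))) :
    ∃ φ : (L ⊗[K] ℍ[K, d, t]) ≃ₐ[L] Matrix (Fin 2) (Fin 2) L,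
      φ (1 ⊗ₜ (⟨0, 1, 0, 0⟩ : ℍ[K, d, t])) =
        !![algebraMap K L d * x, -y; -(algebraMap K L (d * t)) * y, -(algebraMap K L d * x)] ∧
      φ (1 ⊗ₜ (⟨0, 0, 1, 0⟩ : ℍ[K, d, t])) =
        !![algebraMap K L t * y, x; algebraMap K L (d * t) * x, -(algebraMap K L t * y)] ∧
      φ (1 ⊗ₜ (⟨0, 0, 0, 1⟩ : ℍ[K, d, t])) =
        !![0, 1; -(algebraMap K L (d * t)), 0] := by
  have hconic : algebraMap K L d * x ^ 2 + algebraMap K L t * y ^ 2 = 1 := by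
    subst hx hy
    exact ConicRing.algebraMap_conic_relation L
  have hunit {a : K} (ha : a ≠ 0) : IsUnit (algebraMap K L a) :=
    ((map_ne_zero _).2 ha).isUnit
  have h2L : IsUnit (2 : L) := by simpa only [map_ofNat] using hunit h2
  refine ⟨AlgEquiv.ofBijective _ (QuaternionAlgebra.bijective_liftEquiv_liftHom_ofConicPoint
    hconic h2L (hunit (mul_ne_zero hd ht))), ?_, ?_, ?_⟩ <;>
    simp [QuaternionAlgebra.Basis.lift, QuaternionAlgebra.Basis.ofConicPoint]

/-- Over the function field `L` of the conic `dx² + ty² = 1` (the fraction field of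
`K[x,y]/(dx²+ty²-1)`), the quaternion algebra `Q = (d,t)_K` splits: the map
`i ↦ [[dx,-y],[-dty,-dx]]`, `j ↦ [[ty,x],[dtx,-ty]]`, `ij ↦ [[0,1],[-dt,0]]` extends to an
isomorphism of `L`-algebras `Q ⊗_K L ≅ M₂(L)`. -/
theorem stmt11 (K : Type) [Field K] (h2 : (2 : K) ≠ 0) (d t : K) (hd : d ≠ 0) (ht : t ≠ 0)
    (L : Type) [Field L] [Algebra (ConicRing K d t) L]
    [IsFractionRing (ConicRing K d t) L] [Algebra K L]
    [IsScalarTower K (ConicRing K d t) L]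
    (x y : L)
    (hx : x = algebraMap (ConicRing K d t) L
      (Ideal.Quotient.mk _ (MvPolynomial.X 0)))
    (hy : y = algebraMap (ConicRing K d t) L
      (Ideal.Quotient.mk _ (MvPolynomial.X 1))) :
    ∃ φ : (L ⊗[K] ℍ[K, d, t]) ≃ₐ[L] Matrix (Fin 2) (Fin 2) L,
      φ (1 ⊗ₜ (⟨0, 1, 0, 0⟩ : ℍ[K, d, t])) =
        !![algebraMap K L d * x, -y; -(algebraMap K L (d * t)) * y, -(algebraMap K L d * x)] ∧
      φ (1 ⊗ₜ (⟨0, 0, 1, 0⟩ : ℍ[K, d, t])) =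
        !![algebraMap K L t * y, x; algebraMap K L (d * t) * x, -(algebraMap K L t * y)] ∧
      φ (1 ⊗ₜ (⟨0, 0, 0, 1⟩ : ℍ[K, d, t])) =
        !![0, 1; -(algebraMap K L (d * t)), 0] :=
  stmt11_general K h2 d t hd ht L x y hx hy
end
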